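/- Let d ≥ 2 and fix ε > 0 such that max(2dε, 10ε) < 1 and 16πd√ε < 1. Let G be a d-layer ReLU network satisfying the R2WDC with constant ε. Then for all nonzero x, y ∈ ℝ^k: ⟨G(x), G(y)⟩ ≥ (1/(4π)) (1/2^d) ‖x‖‖y‖. -/

import Mathlib

open scoped BigOperators
open Real MeasureTheory ProbabilityTheory Filter
open scoped Matrix

noncomputable section

namespace R2WDCFormal

/-- Euclidean inner product on `Fin n → ℝ`. -/
def dotp {n : ℕ} (r s : Fin n → ℝ) : ℝ := ∑ i, r i * s i

/-- Euclidean norm on `Fin n → ℝ`. -/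
def vnorm {n : ℕ} (r : Fin n → ℝ) : ℝ := Real.sqrt (dotp r r)

/-- Angle between two vectors. -/
def ang {n : ℕ} (r s : Fin n → ℝ) : ℝ := Real.arccos (dotp r s / (vnorm r * vnorm s))

/-- Outer product of two vectors, as a matrix. -/
def outer {n : ℕ} (u v : Fin n → ℝ) : Matrix (Fin n) (Fin n) ℝ := Matrix.of fun i j => u i * v j

/-- The matrix sending `r̂ ↦ ŝ`, `ŝ ↦ r̂` with kernel `span{r,s}ᗮ`. -/
def Mswap {n : ℕ} (r s : Fin n → ℝ) : Matrix (Fin n) (Fin n) ℝ :=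
  outer ((vnorm ((vnorm r)⁻¹ • r + (vnorm s)⁻¹ • s))⁻¹ • ((vnorm r)⁻¹ • r + (vnorm s)⁻¹ • s))
        ((vnorm ((vnorm r)⁻¹ • r + (vnorm s)⁻¹ • s))⁻¹ • ((vnorm r)⁻¹ • r + (vnorm s)⁻¹ • s)) -
  outer ((vnorm ((vnorm r)⁻¹ • r - (vnorm s)⁻¹ • s))⁻¹ • ((vnorm r)⁻¹ • r - (vnorm s)⁻¹ • s))
        ((vnorm ((vnorm r)⁻¹ • r - (vnorm s)⁻¹ • s))⁻¹ • ((vnorm r)⁻¹ • r - (vnorm s)⁻¹ • s))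

/-- The matrix `Q_{r,s}`. -/
def Qmat {n : ℕ} (r s : Fin n → ℝ) : Matrix (Fin n) (Fin n) ℝ :=
  if r = 0 ∨ s = 0 then 0
  else ((π - ang r s) / (2 * π)) • (1 : Matrix (Fin n) (Fin n) ℝ) +
    (Real.sin (ang r s) / (2 * π)) • Mswap r s

/-- `W_{+,x} = diag(Wx > 0) W`. -/
def Wplus {m n : ℕ} (W : Matrix (Fin m) (Fin n) ℝ) (x : Fin n → ℝ) : Matrix (Fin m) (Fin n) ℝ :=
  Matrix.of fun i j => if 0 < W.mulVec x i then W i j else 0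

/-- Entrywise ReLU. -/
def reluVec {n : ℕ} (v : Fin n → ℝ) : Fin n → ℝ := fun i => max (v i) 0

/-- Sub-network `G_j` of the ReLU network with layer sizes `nn` and weights `W`. -/
def subnet (nn : ℕ → ℕ) (W : ∀ i : ℕ, Matrix (Fin (nn (i + 1))) (Fin (nn i)) ℝ) :
    ∀ j : ℕ, (Fin (nn 0) → ℝ) → Fin (nn j) → ℝ
  | 0, x => x
  | j + 1, x => reluVec ((W j).mulVec (subnet nn W j x))

/-- `Λ_{j,x} = W_{j,+,x} ⋯ W_{1,+,x}`. -/
def LambdaMat (nn : ℕ → ℕ) (W : ∀ i : ℕ, Matrix (Fin (nn (i + 1))) (Fin (nn i)) ℝ) :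
    ∀ j : ℕ, (Fin (nn 0) → ℝ) → Matrix (Fin (nn j)) (Fin (nn 0)) ℝ
  | 0, _ => 1
  | j + 1, x => Wplus (W j) (subnet nn W j x) * LambdaMat nn W j x

/-- Range Restricted Weight Distribution Condition with constant `ε` of a `d`-layer network. -/
def R2WDCond (nn : ℕ → ℕ) (d : ℕ)
    (W : ∀ i : ℕ, Matrix (Fin (nn (i + 1))) (Fin (nn i)) ℝ) (ε : ℝ) : Prop :=
  ∀ i < d, ∀ x y x₁ x₂ x₃ x₄ : Fin (nn 0) → ℝ,
    |dotp (((Wplus (W i) (subnet nn W i x))ᵀ * Wplus (W i) (subnet nn W i y) -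
        Qmat (subnet nn W i x) (subnet nn W i y)).mulVec
        (subnet nn W i x₁ - subnet nn W i x₂)) (subnet nn W i x₃ - subnet nn W i x₄)| ≤
      ε * vnorm (subnet nn W i x₁ - subnet nn W i x₂) * vnorm (subnet nn W i x₃ - subnet nn W i x₄)

/-- Range Restricted Isometry Condition of `A` with respect to the network, with constant `ε`. -/
def RRICond (nn : ℕ → ℕ) (d : ℕ)
    (W : ∀ i : ℕ, Matrix (Fin (nn (i + 1))) (Fin (nn i)) ℝ) {mm : ℕ}
    (A : Matrix (Fin mm) (Fin (nn d)) ℝ) (ε : ℝ) : Prop :=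
  ∀ x₁ x₂ x₃ x₄ : Fin (nn 0) → ℝ,
    |dotp ((Aᵀ * A - 1).mulVec (subnet nn W d x₁ - subnet nn W d x₂))
        (subnet nn W d x₃ - subnet nn W d x₄)| ≤
      ε * vnorm (subnet nn W d x₁ - subnet nn W d x₂) * vnorm (subnet nn W d x₃ - subnet nn W d x₄)

/-- The angle-distortion function `g`. -/
def gAngle (θ : ℝ) : ℝ := Real.arccos (((π - θ) * Real.cos θ + Real.sin θ) / π)

/-- The deterministic vector field `h̃_{x,y}`. -/
def htilde {k : ℕ} (d : ℕ) (x y : Fin k → ℝ) : Fin k → ℝ :=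
  (1 / 2 ^ d : ℝ) • ((∏ i ∈ Finset.range d, (π - gAngle^[i] (ang x y)) / π) • y +
    (∑ i ∈ Finset.Ico 1 d, Real.sin (gAngle^[i] (ang x y)) / π *
      ∏ j ∈ Finset.Ico (i + 1) d, (π - gAngle^[j] (ang x y)) / π) •
      (vnorm y • (vnorm x)⁻¹ • x))

/-- Spectral (ℓ²-operator) norm of a matrix. -/
def specNorm {a b : ℕ} (M : Matrix (Fin a) (Fin b) ℝ) : ℝ :=
  ⨆ v : {v : Fin b → ℝ // vnorm v ≤ 1}, vnorm (M.mulVec v)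

/-- The entries of the random matrix `W` are i.i.d. `N(0, v)`. -/
def IIDGaussian {Ω : Type*} [MeasurableSpace Ω] (μ : Measure Ω) {a b : ℕ}
    (W : Ω → Fin a → Fin b → ℝ) (v : NNReal) : Prop :=
  Measure.map W μ = Measure.pi fun _ : Fin a => Measure.pi fun _ : Fin b => gaussianReal 0 v

/-- The noise factor `ω`. -/
def omegaNoise (nn : ℕ → ℕ) (d mm : ℕ) : ℝ :=
  2 / 2 ^ ((d : ℝ) / 2) * Real.sqrt (13 / 12) *
    Real.sqrt ((nn 0 : ℝ) / mm * Real.log (5 * ∏ j ∈ Finset.Icc 1 d, Real.exp 1 * nn j / nn 0))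

/-- Clarke subdifferential of `f` at `x`: the convex hull of all limits of gradients of `f`
at nearby differentiability points. -/
def clarkeSubdiff {k : ℕ} (f : (Fin k → ℝ) → ℝ) (x : Fin k → ℝ) : Set (Fin k → ℝ) :=
  convexHull ℝ {v : Fin k → ℝ | ∃ u : ℕ → Fin k → ℝ,
    (∀ t, DifferentiableAt ℝ f (u t)) ∧
    Tendsto u atTop (nhds x) ∧
    Tendsto (fun t => fun i => fderiv ℝ f (u t) (Pi.single i 1)) atTop (nhds v)}

/-- The compressed sensing objective `f_cs`. -/
def fcs (nn : ℕ → ℕ) (d : ℕ) (W : ∀ i : ℕ, Matrix (Fin (nn (i + 1))) (Fin (nn i)) ℝ)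
    {mm : ℕ} (A : Matrix (Fin mm) (Fin (nn d)) ℝ) (b : Fin mm → ℝ)
    (x : Fin (nn 0) → ℝ) : ℝ :=
  1 / 2 * vnorm (b - A.mulVec (subnet nn W d x)) ^ 2

/-!
By the R2WDC, a layer maps the correlation `⟨r, s⟩` of two hidden representations to
`⟨Q_{r,s} s, r⟩ = ‖r‖ ‖s‖ J(cos θ) / (2π)` up to `ε ‖r‖ ‖s‖`, where
`J(a) = (π - arccos a) a + √(1 - a²)` is the arc-cosine kernel, and it maps `‖r‖²` to
`‖r‖² / 2` up to `ε ‖r‖²`. Since `J ≥ 0`, after the first layer every cosine is `≥ -4ε`;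
since `J(a) ≥ 1 - 4(π + 1)ε` for such `a`, the last layer gives
`⟨G(x), G(y)⟩ ≳ ‖G_{d-1}(x)‖ ‖G_{d-1}(y)‖ / (2π) ≥ (1/2 - ε)^{d-1} ‖x‖ ‖y‖ / (2π)`, and
`(1 - 2ε)^{d-1} ≥ 1/2` because `dε` is small.
-/

section Euclidean

variable {n : ℕ}

lemma dotp_eq_dotProduct (r s : Fin n → ℝ) : dotp r s = r ⬝ᵥ s := rfl

lemma vnorm_sq (r : Fin n → ℝ) : vnorm r ^ 2 = r ⬝ᵥ r :=
  Real.sq_sqrt (Finset.sum_nonneg fun i _ => mul_self_nonneg (r i))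

lemma vnorm_nonneg (r : Fin n → ℝ) : 0 ≤ vnorm r := sqrt_nonneg _

lemma vnorm_ne_zero {r : Fin n → ℝ} (hr : r ≠ 0) : vnorm r ≠ 0 := by
  intro h
  apply hr
  rw [← dotProduct_self_eq_zero, ← vnorm_sq, h, zero_pow two_ne_zero]

lemma vnorm_zero : vnorm (0 : Fin n → ℝ) = 0 := by
  simp [vnorm, dotp]

lemma dotProduct_normalize_self {r : Fin n → ℝ} (hr : r ≠ 0) :
    ((vnorm r)⁻¹ • r) ⬝ᵥ ((vnorm r)⁻¹ • r) = 1 := by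
  have := vnorm_ne_zero hr
  rw [smul_dotProduct, dotProduct_smul, ← vnorm_sq, smul_eq_mul, smul_eq_mul]
  field_simp

lemma outer_normalize_mulVec_dotProduct (p v w : Fin n → ℝ) :
    (outer ((vnorm p)⁻¹ • p) ((vnorm p)⁻¹ • p) *ᵥ v) ⬝ᵥ w = (p ⬝ᵥ v) * (p ⬝ᵥ w) / (p ⬝ᵥ p) := by
  rw [outer, ← Matrix.vecMulVec, Matrix.vecMulVec_mulVec, op_smul_eq_smul]
  simp only [smul_dotProduct, smul_eq_mul, ← vnorm_sq]
  ring

lemma mul_self_div_two_mul {K : Type*} [Field K] (a : K) : a * a / (2 * a) = a / 2 := by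
  rw [mul_comm 2 a, ← div_div, mul_self_div_self]

-- With `c = ⟨u, v⟩`, the two rank-one pieces contribute `(1 + c) / 2` and `(1 - c) / 2`.
lemma swap_mulVec_dotProduct {u v : Fin n → ℝ} (hu : u ⬝ᵥ u = 1) (hv : v ⬝ᵥ v = 1) :
    ((outer ((vnorm (u + v))⁻¹ • (u + v)) ((vnorm (u + v))⁻¹ • (u + v)) -
      outer ((vnorm (u - v))⁻¹ • (u - v)) ((vnorm (u - v))⁻¹ • (u - v))) *ᵥ v) ⬝ᵥ u = 1 := by
  rw [Matrix.sub_mulVec, sub_dotProduct, outer_normalize_mulVec_dotProduct,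
    outer_normalize_mulVec_dotProduct]
  simp only [add_dotProduct, sub_dotProduct, dotProduct_add, dotProduct_sub, hu, hv,
    dotProduct_comm v u]
  generalize u ⬝ᵥ v = c
  rw [show 1 + c + (c + 1) = 2 * (1 + c) by ring, show 1 - c - (c - 1) = 2 * (1 - c) by ring,
    show (c - 1) * (1 - c) = -((1 - c) * (1 - c)) by ring, add_comm c 1, neg_div,
    mul_self_div_two_mul, mul_self_div_two_mul]
  ring

lemma Mswap_mulVec_dotProduct {r s : Fin n → ℝ} (hr : r ≠ 0) (hs : s ≠ 0) :
    (Mswap r s *ᵥ s) ⬝ᵥ r = vnorm r * vnorm s := by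
  have hswap := swap_mulVec_dotProduct (dotProduct_normalize_self hr)
    (dotProduct_normalize_self hs)
  calc (Mswap r s *ᵥ s) ⬝ᵥ r
      = (Mswap r s *ᵥ (vnorm s • (vnorm s)⁻¹ • s)) ⬝ᵥ (vnorm r • (vnorm r)⁻¹ • r) := by
        rw [smul_inv_smul₀ (vnorm_ne_zero hs), smul_inv_smul₀ (vnorm_ne_zero hr)]
    _ = vnorm r * vnorm s := by
        rw [Matrix.mulVec_smul, smul_dotProduct, dotProduct_smul, Mswap, hswap, smul_eq_mul,
          smul_eq_mul, mul_one, mul_comm]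

end Euclidean

section ArccosKernel

/-- The angular factor `J(θ) = (π - θ) cos θ + sin θ` of the arc-cosine kernel, as a function
of `a = cos θ`. -/
def arccosKernel (a : ℝ) : ℝ := (π - arccos a) * a + √(1 - a ^ 2)

lemma arccosKernel_one : arccosKernel 1 = π := by
  simp [arccosKernel]

lemma mul_cos_le_sin {φ : ℝ} (h0 : 0 ≤ φ) (h : φ < π / 2) : φ * cos φ ≤ sin φ := by
  have hcos : 0 < cos φ := cos_pos_of_mem_Ioo ⟨by linarith [pi_pos], h⟩
  calc φ * cos φ ≤ tan φ * cos φ := mul_le_mul_of_nonneg_right (le_tan h0 h) hcos.le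
    _ = sin φ := tan_mul_cos hcos.ne'

lemma arccosKernel_nonneg (a : ℝ) : 0 ≤ arccosKernel a := by
  unfold arccosKernel
  rcases le_or_gt 0 a with ha | ha
  · have := arccos_le_pi a
    positivity
  rcases le_or_gt a (-1) with ha1 | ha1
  · rw [arccos_of_le_neg_one ha1, sub_self, zero_mul, zero_add]
    positivity
  -- for `a = -cos φ` with `0 ≤ φ < π / 2` the kernel is `sin φ - φ cos φ`
  have hφ : π - arccos a = arccos (-a) := by rw [arccos_neg]
  have hcos : cos (arccos (-a)) = -a := cos_arccos (by linarith) (by linarith)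
  have hsin : sin (arccos (-a)) = √(1 - a ^ 2) := by rw [sin_arccos, neg_sq]
  have := mul_cos_le_sin (arccos_nonneg (-a)) (arccos_lt_pi_div_two.2 (neg_pos.2 ha))
  rw [hcos] at this
  rw [hφ, ← hsin]
  linarith

lemma one_sub_abs_le_sqrt_one_sub_sq (a : ℝ) : 1 - |a| ≤ √(1 - a ^ 2) := by
  rcases le_or_gt 1 |a| with ha | ha
  · exact (sub_nonpos.2 ha).trans (sqrt_nonneg _)
  · rw [le_sqrt (by linarith) (by nlinarith [sq_abs a, abs_nonneg a])]
    nlinarith [sq_abs a, abs_nonneg a]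

lemma one_sub_le_arccosKernel {a δ : ℝ} (hδ : 0 ≤ δ) (ha : -δ ≤ a) :
    1 - (π + 1) * δ ≤ arccosKernel a := by
  have hsqrt := one_sub_abs_le_sqrt_one_sub_sq a
  have h0 := arccos_nonneg a
  unfold arccosKernel
  rcases le_or_gt 0 a with ha0 | ha0
  · have : arccos a ≤ π / 2 := arccos_le_pi_div_two.2 ha0
    rw [abs_of_nonneg ha0] at hsqrt
    nlinarith [pi_gt_three]
  · rw [abs_of_neg ha0] at hsqrt
    nlinarith [pi_gt_three]

end ArccosKernel

section QForm

variable {n : ℕ}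

-- `ang r s = arccos (cosAngle r s)` by definition; `cosAngle r s = 0` if `r = 0` or `s = 0`.
def cosAngle (r s : Fin n → ℝ) : ℝ := dotp r s / (vnorm r * vnorm s)

lemma dotp_Qmat_mulVec (r s : Fin n → ℝ) :
    dotp (Qmat r s *ᵥ s) r = arccosKernel (cosAngle r s) * (vnorm r * vnorm s) / (2 * π) := by
  by_cases h : r = 0 ∨ s = 0
  · rcases h with rfl | rfl <;> simp [Qmat, vnorm_zero, dotp]
  have hr : r ≠ 0 := fun h' => h (Or.inl h')
  have hs : s ≠ 0 := fun h' => h (Or.inr h')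
  have hrs : dotp r s = cosAngle r s * (vnorm r * vnorm s) :=
    (div_mul_cancel₀ _ (mul_ne_zero (vnorm_ne_zero hr) (vnorm_ne_zero hs))).symm
  rw [Qmat, if_neg h, dotp_eq_dotProduct, Matrix.add_mulVec, Matrix.smul_mulVec,
    Matrix.smul_mulVec, Matrix.one_mulVec, add_dotProduct, smul_dotProduct, smul_dotProduct,
    Mswap_mulVec_dotProduct hr hs, dotProduct_comm s r, ← dotp_eq_dotProduct, hrs, ang,
    ← cosAngle, sin_arccos, arccosKernel, smul_eq_mul, smul_eq_mul]
  ring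

lemma dotp_Qmat_self_mulVec (r : Fin n → ℝ) : dotp (Qmat r r *ᵥ r) r = vnorm r ^ 2 / 2 := by
  rcases eq_or_ne r 0 with rfl | hr
  · simp [Qmat, vnorm_zero, dotp]
  have hv := vnorm_ne_zero hr
  have hcos : cosAngle r r = 1 := by
    rw [cosAngle, dotp_eq_dotProduct, ← vnorm_sq, sq, div_self (mul_ne_zero hv hv)]
  rw [dotp_Qmat_mulVec, hcos, arccosKernel_one]
  field_simp [pi_ne_zero]

end QForm

section Network

variable {nn : ℕ → ℕ} {W : ∀ i : ℕ, Matrix (Fin (nn (i + 1))) (Fin (nn i)) ℝ}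

lemma subnet_apply_zero (j : ℕ) : subnet nn W j 0 = 0 := by
  induction j with
  | zero => rfl
  | succ j ih =>
    funext i
    simp [subnet, ih, reluVec]

lemma subnet_succ_eq_Wplus_mulVec (j : ℕ) (x : Fin (nn 0) → ℝ) :
    subnet nn W (j + 1) x = Wplus (W j) (subnet nn W j x) *ᵥ subnet nn W j x := by
  funext i
  simp only [subnet, reluVec, Wplus, Matrix.mulVec, dotProduct, Matrix.of_apply]
  split_ifs with h
  · exact max_eq_left h.le
  · simp [max_eq_right (not_lt.1 h)]

end Network

namespace R2WDCond

variable {nn : ℕ → ℕ} {d : ℕ} {W : ∀ i : ℕ, Matrix (Fin (nn (i + 1))) (Fin (nn i)) ℝ} {ε : ℝ}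

/-- The R2WDC with `x₁ = y`, `x₃ = x` and `x₂ = x₄ = 0`, where every `G_i` vanishes. -/
lemma abs_dotp_subnet_succ_sub_le (hG : R2WDCond nn d W ε) {i : ℕ} (hi : i < d)
    (x y : Fin (nn 0) → ℝ) :
    |dotp (subnet nn W (i + 1) x) (subnet nn W (i + 1) y) -
        dotp (Qmat (subnet nn W i x) (subnet nn W i y) *ᵥ subnet nn W i y) (subnet nn W i x)| ≤
      ε * vnorm (subnet nn W i y) * vnorm (subnet nn W i x) := by
  have h := hG i hi x y y 0 x 0
  rwa [subnet_apply_zero, sub_zero, sub_zero, dotp_eq_dotProduct, Matrix.sub_mulVec,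
    sub_dotProduct, ← Matrix.mulVec_mulVec, Matrix.mulVec_transpose, ← Matrix.dotProduct_mulVec,
    ← subnet_succ_eq_Wplus_mulVec, ← subnet_succ_eq_Wplus_mulVec, dotProduct_comm,
    ← dotp_eq_dotProduct, ← dotp_eq_dotProduct] at h

lemma sq_vnorm_subnet_succ_ge (hG : R2WDCond nn d W ε) {i : ℕ} (hi : i < d)
    (x : Fin (nn 0) → ℝ) :
    (1 / 2 - ε) * vnorm (subnet nn W i x) ^ 2 ≤ vnorm (subnet nn W (i + 1) x) ^ 2 := by
  have h := hG.abs_dotp_subnet_succ_sub_le hi x x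
  rw [dotp_Qmat_self_mulVec, dotp_eq_dotProduct, ← vnorm_sq] at h
  linarith [(abs_le.1 h).1]

lemma dotp_subnet_succ_ge (hG : R2WDCond nn d W ε) {i : ℕ} (hi : i < d)
    (x y : Fin (nn 0) → ℝ) :
    (arccosKernel (cosAngle (subnet nn W i x) (subnet nn W i y)) / (2 * π) - ε) *
        (vnorm (subnet nn W i x) * vnorm (subnet nn W i y)) ≤
      dotp (subnet nn W (i + 1) x) (subnet nn W (i + 1) y) := by
  have h := hG.abs_dotp_subnet_succ_sub_le hi x y
  rw [dotp_Qmat_mulVec] at h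
  rw [sub_mul, div_mul_eq_mul_div]
  linarith [(abs_le.1 h).1]

lemma mul_vnorm_subnet_succ_ge (hG : R2WDCond nn d W ε) (hε : ε ≤ 1 / 2) {i : ℕ}
    (hi : i < d) (x y : Fin (nn 0) → ℝ) :
    (1 / 2 - ε) * (vnorm (subnet nn W i x) * vnorm (subnet nn W i y)) ≤
      vnorm (subnet nn W (i + 1) x) * vnorm (subnet nn W (i + 1) y) := by
  have hx := hG.sq_vnorm_subnet_succ_ge hi x
  have hy := hG.sq_vnorm_subnet_succ_ge hi y
  rw [← pow_le_pow_iff_left₀ _ (mul_nonneg (vnorm_nonneg _) (vnorm_nonneg _)) two_ne_zero]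
  · calc ((1 / 2 - ε) * (vnorm (subnet nn W i x) * vnorm (subnet nn W i y))) ^ 2
        = ((1 / 2 - ε) * vnorm (subnet nn W i x) ^ 2) *
            ((1 / 2 - ε) * vnorm (subnet nn W i y) ^ 2) := by ring
      _ ≤ _ := by rw [mul_pow]; gcongr
  · exact mul_nonneg (by linarith) (mul_nonneg (vnorm_nonneg _) (vnorm_nonneg _))

lemma pow_mul_vnorm_le_subnet (hG : R2WDCond nn d W ε) (hε : ε ≤ 1 / 2) {i : ℕ}
    (hi : i ≤ d) (x y : Fin (nn 0) → ℝ) :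
    (1 / 2 - ε) ^ i * (vnorm x * vnorm y) ≤ vnorm (subnet nn W i x) * vnorm (subnet nn W i y) := by
  induction i with
  | zero => simp [subnet]
  | succ i ih =>
    calc (1 / 2 - ε) ^ (i + 1) * (vnorm x * vnorm y)
        = (1 / 2 - ε) * ((1 / 2 - ε) ^ i * (vnorm x * vnorm y)) := by ring
      _ ≤ (1 / 2 - ε) * (vnorm (subnet nn W i x) * vnorm (subnet nn W i y)) :=
          mul_le_mul_of_nonneg_left (ih (by omega)) (by linarith)
      _ ≤ _ := hG.mul_vnorm_subnet_succ_ge hε (by omega) x y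

/-- `⟨Q_{r,s} s, r⟩ ≥ 0`, and a layer shrinks `‖r‖ ‖s‖` by a factor `1 / 2 - ε ≥ 1 / 4` at worst. -/
lemma neg_le_cosAngle_subnet_succ (hG : R2WDCond nn d W ε) (hε0 : 0 ≤ ε) (hε : ε ≤ 1 / 4)
    {i : ℕ} (hi : i < d) (x y : Fin (nn 0) → ℝ) :
    -(4 * ε) ≤ cosAngle (subnet nn W (i + 1) x) (subnet nn W (i + 1) y) := by
  have hdotp := hG.dotp_subnet_succ_ge hi x y
  have hnorm := hG.mul_vnorm_subnet_succ_ge (by linarith) hi x y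
  set P := vnorm (subnet nn W i x) * vnorm (subnet nn W i y)
  set P' := vnorm (subnet nn W (i + 1) x) * vnorm (subnet nn W (i + 1) y)
  have hP : 0 ≤ P := mul_nonneg (vnorm_nonneg _) (vnorm_nonneg _)
  have hκ : 0 ≤ arccosKernel (cosAngle (subnet nn W i x) (subnet nn W i y)) / (2 * π) :=
    div_nonneg (arccosKernel_nonneg _) (by positivity)
  have hlow : -(4 * ε) * P' ≤ dotp (subnet nn W (i + 1) x) (subnet nn W (i + 1) y) := by
    have : ε * P ≤ 4 * ε * P' := by
      nlinarith [mul_le_mul_of_nonneg_left hnorm (by positivity : (0 : ℝ) ≤ 4 * ε),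
        mul_nonneg (mul_nonneg hε0 hP) (by linarith : (0 : ℝ) ≤ 1 - 4 * ε)]
    nlinarith [mul_nonneg hκ hP]
  rcases (mul_nonneg (vnorm_nonneg _) (vnorm_nonneg _) : 0 ≤ P').eq_or_lt with h0 | hpos
  · rw [cosAngle, ← h0, div_zero]
    linarith
  · rwa [cosAngle, le_div_iff₀ hpos]

end R2WDCond

section Constants

lemma le_of_sixteen_pi_mul_sqrt_lt {d ε : ℝ} (hd : 2 ≤ d) (hε : 0 ≤ ε)
    (h : 16 * π * d * √ε < 1) : ε ≤ 1 / 100 ∧ 4 * d * ε ≤ 1 := by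
  have hs := sqrt_nonneg ε
  have hsq : √ε ^ 2 = ε := sq_sqrt hε
  have hds : d * √ε < 1 / 48 := by nlinarith [pi_gt_three, mul_nonneg (by linarith : 0 ≤ d) hs]
  have hs96 : √ε < 1 / 96 := by nlinarith
  constructor <;> nlinarith

lemma half_pow_succ_le_pow {ε : ℝ} (n : ℕ) (hε1 : ε ≤ 1) (hn : 4 * n * ε ≤ 1) :
    (1 / 2 : ℝ) ^ (n + 1) ≤ (1 / 2 - ε) ^ n := by
  have hbern := one_add_mul_le_pow (by linarith : (-2 : ℝ) ≤ -(2 * ε)) n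
  calc (1 / 2 : ℝ) ^ (n + 1) = (1 / 2) ^ n * (1 / 2) := pow_succ _ _
    _ ≤ (1 / 2) ^ n * (1 + n * -(2 * ε)) := by gcongr; linarith
    _ ≤ (1 / 2) ^ n * (1 + -(2 * ε)) ^ n := by gcongr
    _ = (1 / 2 - ε) ^ n := by rw [← mul_pow]; ring_nf

lemma inv_four_pi_le {ε : ℝ} (hε0 : 0 ≤ ε) (hε : ε ≤ 1 / 100) :
    1 / (4 * π) ≤ (1 - (π + 1) * (4 * ε)) / (2 * π) - ε := by
  have hsmall : 16 * (π + 1) * ε + 8 * π * ε ≤ 2 := by nlinarith [pi_lt_four]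
  rw [div_sub' (by positivity), div_le_div_iff₀ (by positivity) (by positivity)]
  nlinarith [mul_nonneg pi_pos.le (sub_nonneg.2 hsmall)]

end Constants

theorem statement14_general (nn : ℕ → ℕ) (d : ℕ) (hd : 2 ≤ d)
    (W : ∀ i : ℕ, Matrix (Fin (nn (i + 1))) (Fin (nn i)) ℝ) (ε : ℝ)
    (hε : 0 < ε)
    (hεpi : 16 * π * (d : ℝ) * Real.sqrt ε < 1)
    (hG : R2WDCond nn d W ε) :
    ∀ x y : Fin (nn 0) → ℝ, x ≠ 0 → y ≠ 0 →
      1 / (4 * π) * (1 / 2 ^ d) * vnorm x * vnorm y ≤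
        dotp (subnet nn W d x) (subnet nn W d y) := by
  intro x y _ _
  obtain ⟨hε100, hdε⟩ := le_of_sixteen_pi_mul_sqrt_lt (by exact_mod_cast hd) hε.le hεpi
  obtain ⟨n, rfl⟩ : ∃ n, d = n + 1 := ⟨d - 1, by omega⟩
  have hcos : -(4 * ε) ≤ cosAngle (subnet nn W n x) (subnet nn W n y) := by
    obtain ⟨m, rfl⟩ : ∃ m, n = m + 1 := ⟨n - 1, by omega⟩
    exact hG.neg_le_cosAngle_subnet_succ hε.le (by linarith) (by omega) x y
  have hκ := one_sub_le_arccosKernel (by positivity) hcos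
  have hconst := inv_four_pi_le hε.le hε100
  have hpow := half_pow_succ_le_pow (ε := ε) n (by linarith) (by push_cast at hdε; linarith)
  have hnorm := hG.pow_mul_vnorm_le_subnet (by linarith) (Nat.le_succ n) x y
  have hxy := mul_nonneg (vnorm_nonneg x) (vnorm_nonneg y)
  have hconst0 : 0 ≤ (1 - (π + 1) * (4 * ε)) / (2 * π) - ε :=
    le_trans (by positivity) hconst
  calc 1 / (4 * π) * (1 / 2 ^ (n + 1)) * vnorm x * vnorm y
      = 1 / (4 * π) * ((1 / 2) ^ (n + 1) * (vnorm x * vnorm y)) := by rw [one_div_pow]; ring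
    _ ≤ ((1 - (π + 1) * (4 * ε)) / (2 * π) - ε) * ((1 / 2 - ε) ^ n * (vnorm x * vnorm y)) :=
        mul_le_mul hconst (mul_le_mul_of_nonneg_right hpow hxy) (by positivity) hconst0
    _ ≤ (arccosKernel (cosAngle (subnet nn W n x) (subnet nn W n y)) / (2 * π) - ε) *
          (vnorm (subnet nn W n x) * vnorm (subnet nn W n y)) :=
        mul_le_mul (by gcongr) hnorm (mul_nonneg (pow_nonneg (by linarith) n) hxy)
          (hconst0.trans (by gcongr))
    _ ≤ dotp (subnet nn W (n + 1) x) (subnet nn W (n + 1) y) :=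
        hG.dotp_subnet_succ_ge (Nat.lt_succ_self n) x y

theorem statement14 (nn : ℕ → ℕ) (d : ℕ) (hd : 2 ≤ d)
    (W : ∀ i : ℕ, Matrix (Fin (nn (i + 1))) (Fin (nn i)) ℝ) (ε : ℝ)
    (hε : 0 < ε) (hεd : 2 * (d : ℝ) * ε < 1) (hε10 : 10 * ε < 1)
    (hεpi : 16 * π * (d : ℝ) * Real.sqrt ε < 1)
    (hG : R2WDCond nn d W ε) :
    ∀ x y : Fin (nn 0) → ℝ, x ≠ 0 → y ≠ 0 →
      1 / (4 * π) * (1 / 2 ^ d) * vnorm x * vnorm y ≤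
        dotp (subnet nn W d x) (subnet nn W d y) :=
  statement14_general nn d hd W ε hε hεpi hG
end R2WDCFormal
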